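/- Given a tree species R on {1,…,n}, the rational span of {A(T) : T ∈ R} is a commutative ℚ-subalgebra of M_n(ℚ) consisting of symmetric magic matrices of sum zero, all simultaneously diagonalizable, and the family {A(T) : T ∈ R} is linearly independent. -/

import Mathlib

/-!
`A(T) v` equals `|T| v` minus the sum of `v` over `T` on `T`, and vanishes outside `T`. Hence
`A(S) A(T)` is `0`, `|T| A(S)` or `|S| A(T)` according as `S` and `T` are disjoint, `S ⊆ T` or
`T ⊆ S`, which gives closure under products and commutativity.

For linear independence, take `T` of maximal size with a nonzero coefficient and two elements of
`T` lying in no smaller member of `R`: the corresponding entry of the combination sees only that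
coefficient.

For the eigenbasis, attach to each element `i` other than the least one the smallest member `M`
of `R` containing `i` and a smaller element, and the vector `|F| 1_B - |B| 1_F`, where `B` and `F`
are the children of `M` containing `i` and the least element of `M`. It has sum zero and is
constant on every member of `R` not containing `M`, so it is an eigenvector of each `A(T)`, with
eigenvalue `|T|` if `M ⊆ T` and `0` otherwise. Together with the all-ones vector these form a
basis: joint eigenvectors with different eigenvalues are orthogonal, and within one joint
eigenspace the vector attached to `i` is the only one that is nonzero at `i`.
-/

open BigOperators Matrix

/-- A matrix is *magic* with sum `c` if all of its row sums and column sums equal `c`. -/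
def IsMagic {n : ℕ} {K : Type*} [AddCommMonoid K] (A : Matrix (Fin n) (Fin n) K) (c : K) : Prop :=
  (∀ i, ∑ j, A i j = c) ∧ (∀ j, ∑ i, A i j = c)

/-- The elementary magic matrix `A(T)`. -/
def AT (n : ℕ) (T : Finset (Fin n)) : Matrix (Fin n) (Fin n) ℚ :=
  fun i j => if i ∈ T ∧ j ∈ T then (if i = j then (T.card : ℚ) - 1 else -1) else 0

theorem mul_mem_span_of_forall_mul_mem {R A : Type*} [CommSemiring R] [Semiring A] [Algebra R A]
    {s : Set A} (hs : ∀ x ∈ s, ∀ y ∈ s, x * y ∈ Submodule.span R s) {x y : A}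
    (hx : x ∈ Submodule.span R s) (hy : y ∈ Submodule.span R s) : x * y ∈ Submodule.span R s := by
  have hxy := Submodule.mul_mem_mul hx hy
  rw [Submodule.span_mul_span] at hxy
  refine Submodule.span_le.mpr ?_ hxy
  rintro _ ⟨x, hx, y, hy, rfl⟩
  exact hs x hx y hy

theorem commute_of_mem_span {R A : Type*} [CommSemiring R] [Semiring A] [Algebra R A]
    {s : Set A} (hs : ∀ x ∈ s, ∀ y ∈ s, Commute x y) {x y : A}
    (hx : x ∈ Submodule.span R s) (hy : y ∈ Submodule.span R s) : Commute x y :=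
  Commute.span_left (fun x' hx' ↦ Commute.span_right (hs x' hx') y hy) x hx

section LinearAlgebra

variable {m K : Type*} [Fintype m] [Field K]

theorem dotProduct_eq_zero_of_mulVec_eq_smul {A : Matrix m m K} (hA : Aᵀ = A) {x y : m → K}
    {a c : K} (hx : A *ᵥ x = a • x) (hy : A *ᵥ y = c • y) (hac : a ≠ c) : x ⬝ᵥ y = 0 := by
  have h : c * (x ⬝ᵥ y) = a * (x ⬝ᵥ y) := by
    rw [← smul_eq_mul, ← dotProduct_smul, ← hy, dotProduct_mulVec, ← hA, vecMul_transpose, hx,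
      smul_dotProduct, smul_eq_mul]
  exact (mul_eq_mul_right_iff.mp h).resolve_left hac.symm

/-- Different joint eigenvalues give orthogonal vectors, so the part of a vanishing combination
lying in one joint eigenspace is orthogonal to itself. -/
theorem linearIndependent_of_mulVec_eq_smul [LinearOrder K] [IsStrictOrderedRing K]
    {ι κ : Type*} [Fintype ι] (A : κ → Matrix m m K) (hA : ∀ k, (A k)ᵀ = A k)
    (b : ι → m → K) (χ : ι → κ → K) (hb : ∀ i k, A k *ᵥ b i = χ i k • b i)
    (hlead : ∀ i, ∃ r, b i r ≠ 0 ∧ ∀ j ≠ i, χ j = χ i → b j r = 0) :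
    LinearIndependent K b := by
  classical
  rw [Fintype.linearIndependent_iff]
  intro w hw i
  set x := ∑ j with χ j = χ i, w j • b j with hx
  have horth : x ⬝ᵥ ∑ j with ¬χ j = χ i, w j • b j = 0 := by
    rw [dotProduct_sum]
    refine Finset.sum_eq_zero fun j hj ↦ ?_
    obtain ⟨k, hk⟩ := Function.ne_iff.mp (Finset.mem_filter.mp hj).2
    rw [dotProduct_smul, hx, sum_dotProduct]
    refine smul_eq_zero_of_right _ (Finset.sum_eq_zero fun l hl ↦ ?_)
    rw [smul_dotProduct, dotProduct_eq_zero_of_mulVec_eq_smul (hA k) (hb l k) (hb j k)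
      (by rw [(Finset.mem_filter.mp hl).2]; exact hk.symm), smul_zero]
  have hx0 : x = 0 := by
    rw [← dotProduct_self_eq_zero]
    rwa [← neg_eq_of_add_eq_zero_right ((Finset.sum_filter_add_sum_filter_not _ _ _).trans hw),
      dotProduct_neg, neg_eq_zero] at horth
  obtain ⟨r, hir, hjr⟩ := hlead i
  have hxr : x r = w i * b i r := by
    rw [hx, Finset.sum_apply, Finset.sum_eq_single_of_mem i (by simp)]
    · rfl
    · intro j hj hji
      simp [hjr j hji (Finset.mem_filter.mp hj).2]
  simpa [hx0, hir] using hxr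

theorem exists_isUnit_forall_isDiag [DecidableEq m] {κ : Type*} (A : κ → Matrix m m K)
    (b : m → m → K) (hb : LinearIndependent K b) (χ : m → κ → K)
    (hAb : ∀ i k, A k *ᵥ b i = χ i k • b i) :
    ∃ P : Matrix m m K, IsUnit P ∧ ∀ k, (P⁻¹ * A k * P).IsDiag := by
  set P := (Matrix.of b)ᵀ
  have hP : IsUnit P := linearIndependent_cols_iff_isUnit.mp hb
  refine ⟨P, hP, fun k ↦ ?_⟩
  have hAP : A k * P = P * diagonal fun i ↦ χ i k := by
    ext r c
    rw [mul_diagonal]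
    simpa [P, mul_comm, Matrix.mul_apply, mulVec, dotProduct] using congrFun (hAb c k) r
  rw [Matrix.mul_assoc, hAP, ← Matrix.mul_assoc,
    nonsing_inv_mul _ ((isUnit_iff_isUnit_det P).mp hP), Matrix.one_mul]
  exact isDiag_diagonal _

end LinearAlgebra

def symmetricMagicZero (n : ℕ) (K : Type*) [Semiring K] :
    Submodule K (Matrix (Fin n) (Fin n) K) where
  carrier := {X | Xᵀ = X ∧ IsMagic X 0}
  add_mem' := by
    rintro X Y ⟨hX, hXr, hXc⟩ ⟨hY, hYr, hYc⟩
    refine ⟨by rw [transpose_add, hX, hY], fun i ↦ ?_, fun j ↦ ?_⟩ <;>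
      simp [Finset.sum_add_distrib, hXr, hXc, hYr, hYc]
  zero_mem' := ⟨transpose_zero, fun _ ↦ by simp, fun _ ↦ by simp⟩
  smul_mem' := by
    rintro c X ⟨hX, hXr, hXc⟩
    refine ⟨by rw [transpose_smul, hX], fun i ↦ ?_, fun j ↦ ?_⟩ <;>
      simp [← Finset.mul_sum, hXr, hXc]

section ElementaryMagic

variable {n : ℕ}

theorem AT_transpose (T : Finset (Fin n)) : (AT n T)ᵀ = AT n T := by
  ext i j
  simp only [transpose_apply, AT, and_comm, eq_comm]

theorem AT_apply_of_ne (T : Finset (Fin n)) {i j : Fin n} (hij : i ≠ j) :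
    AT n T i j = if i ∈ T ∧ j ∈ T then -1 else 0 := by
  simp [AT, hij]

theorem AT_mulVec_apply (T : Finset (Fin n)) (v : Fin n → ℚ) (i : Fin n) :
    (AT n T *ᵥ v) i = if i ∈ T then T.card * v i - ∑ k ∈ T, v k else 0 := by
  split_ifs with hi
  · have h : AT n T i = fun j ↦ (if j = i then (T.card : ℚ) else 0) - if j ∈ T then 1 else 0 := by
      ext j
      by_cases hj : j ∈ T <;> by_cases hji : j = i <;> simp_all [AT, eq_comm]
    simp [mulVec, dotProduct, h, sub_mul, Finset.sum_sub_distrib, Finset.sum_ite_mem]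
  · simp [mulVec, dotProduct, AT, hi]

theorem AT_mulVec_eq_zero {T : Finset (Fin n)} {v : Fin n → ℚ} {a : ℚ}
    (hv : ∀ k ∈ T, v k = a) : AT n T *ᵥ v = 0 := by
  ext i
  rw [AT_mulVec_apply, Finset.sum_congr rfl hv]
  split_ifs with hi
  · simp [hv i hi, mul_comm]
  · rfl

theorem AT_mulVec_eq_card_smul {T : Finset (Fin n)} {v : Fin n → ℚ}
    (hsupp : ∀ k ∉ T, v k = 0) (hsum : ∑ k, v k = 0) : AT n T *ᵥ v = (T.card : ℚ) • v := by
  have hsumT : ∑ k ∈ T, v k = 0 := by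
    rwa [← Finset.sum_subset (Finset.subset_univ T) fun k _ hk ↦ hsupp k hk] at hsum
  ext i
  rw [AT_mulVec_apply, hsumT]
  split_ifs with hi
  · simp
  · simp [hsupp i hi]

theorem AT_mulVec_one (T : Finset (Fin n)) : AT n T *ᵥ (fun _ ↦ 1) = 0 :=
  AT_mulVec_eq_zero fun _ _ ↦ rfl

theorem AT_mul_AT_of_disjoint {S T : Finset (Fin n)} (h : Disjoint S T) :
    AT n S * AT n T = 0 := by
  refine ext_iff_mulVec.mpr fun v ↦ ?_
  rw [← mulVec_mulVec, zero_mulVec]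
  refine AT_mulVec_eq_zero (a := 0) fun k hk ↦ ?_
  rw [AT_mulVec_apply, if_neg (Finset.disjoint_left.mp h hk)]

theorem AT_mul_AT_of_subset {S T : Finset (Fin n)} (h : S ⊆ T) :
    AT n S * AT n T = (T.card : ℚ) • AT n S := by
  refine ext_iff_mulVec.mpr fun v ↦ ?_
  have hconst : ∀ k ∈ S, (AT n T *ᵥ v - (T.card : ℚ) • v) k = -∑ k ∈ T, v k := by
    intro k hk
    simp [AT_mulVec_apply, h hk]
  rw [← mulVec_mulVec, smul_mulVec, ← mulVec_smul, ← sub_eq_zero, ← mulVec_sub]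
  exact AT_mulVec_eq_zero hconst

theorem AT_mul_AT_of_superset {S T : Finset (Fin n)} (h : T ⊆ S) :
    AT n S * AT n T = (S.card : ℚ) • AT n T := by
  rw [← AT_transpose S, ← AT_transpose T, ← transpose_mul, AT_mul_AT_of_subset h,
    transpose_smul]

theorem isMagic_AT (T : Finset (Fin n)) : IsMagic (AT n T) 0 := by
  have hrow : ∀ i, ∑ j, AT n T i j = 0 := fun i ↦ by
    simpa [mulVec, dotProduct] using congrFun (AT_mulVec_one T) i
  refine ⟨hrow, fun j ↦ ?_⟩
  calc ∑ i, AT n T i j = ∑ i, (AT n T)ᵀ j i := rfl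
    _ = 0 := by rw [AT_transpose]; exact hrow j

end ElementaryMagic

section Laminar

variable {α : Type*}

def IsLaminar (R : Finset (Finset α)) : Prop :=
  ∀ T1 ∈ R, ∀ T2 ∈ R, Disjoint T1 T2 ∨ T1 ⊆ T2 ∨ T2 ⊆ T1

variable {R : Finset (Finset α)} {S T T' : Finset α} {x y : α}

theorem IsLaminar.subset_or_subset (hR : IsLaminar R) (hS : S ∈ R) (hT : T ∈ R) (hxS : x ∈ S)
    (hxT : x ∈ T) : S ⊆ T ∨ T ⊆ S :=
  (hR S hS T hT).resolve_left (Finset.not_disjoint_iff.mpr ⟨x, hxS, hxT⟩)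

variable [DecidableEq α]

variable (R) in
/-- The blocks of the elements of `T` are the children of `T` in the tree `R`, together with the
singletons of `T` not covered by a child. -/
def block (T : Finset α) (x : α) : Finset α :=
  {y ∈ T | y = x ∨ ∃ T' ∈ R, T' ⊂ T ∧ x ∈ T' ∧ y ∈ T'}

theorem mem_block_self (hx : x ∈ T) : x ∈ block R T x :=
  Finset.mem_filter.mpr ⟨hx, Or.inl rfl⟩

theorem block_subset : block R T x ⊆ T :=
  Finset.filter_subset _ _

theorem notMem_block (hyx : y ≠ x) (h : ∀ T' ∈ R, T' ⊂ T → x ∈ T' → y ∉ T') :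
    y ∉ block R T x := by
  rintro hy
  obtain ⟨-, rfl | ⟨T', hT', hsub, hx, hy⟩⟩ := Finset.mem_filter.mp hy
  exacts [hyx rfl, h T' hT' hsub hx hy]

theorem IsLaminar.subset_block_or_disjoint (hR : IsLaminar R) (hT : T ∈ R) (hT' : T' ∈ R)
    (hTT' : ¬T ⊆ T') : T' ⊆ block R T x ∨ Disjoint T' (block R T x) := by
  rcases hR T' hT' T hT with hdisj | hsub | hsub
  · exact Or.inr (hdisj.mono_right block_subset)
  · have hss : T' ⊂ T := Finset.ssubset_iff_subset_ne.mpr ⟨hsub, by rintro rfl; exact hTT' le_rfl⟩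
    have hwit : ∀ T'' ∈ R, T'' ⊂ T → x ∈ T'' → T' ⊆ T'' → T' ⊆ block R T x :=
      fun T'' hT'' hss'' hxT'' h z hz ↦
        Finset.mem_filter.mpr ⟨hss''.subset (h hz), Or.inr ⟨T'', hT'', hss'', hxT'', h hz⟩⟩
    refine or_iff_not_imp_right.mpr fun hnd ↦ ?_
    obtain ⟨y, hy, hyb⟩ := Finset.not_disjoint_iff.mp hnd
    obtain ⟨-, rfl | ⟨T'', hT'', hss'', hxT'', hyT''⟩⟩ := Finset.mem_filter.mp hyb
    · exact hwit T' hT' hss hy le_rfl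
    rcases hR.subset_or_subset hT' hT'' hy hyT'' with h | h
    · exact hwit T'' hT'' hss'' hxT'' h
    · exact hwit T' hT' hss (h hxT'') le_rfl
  · exact absurd hsub hTT'

theorem IsLaminar.block_ssubset (hR : IsLaminar R) (hcard : 2 ≤ T.card) :
    block R T x ⊂ T := by
  set C := {T' ∈ R | T' ⊂ T ∧ x ∈ T'}
  rcases C.eq_empty_or_nonempty with hC | hC
  · have hsub : block R T x ⊆ {x} := by
      intro y hy
      obtain ⟨-, rfl | ⟨T', hT', hss, hxT', -⟩⟩ := Finset.mem_filter.mp hy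
      · exact Finset.mem_singleton_self y
      · exact absurd (Finset.mem_filter.mpr ⟨hT', hss, hxT'⟩) (hC ▸ Finset.notMem_empty T')
    refine Finset.ssubset_iff_subset_ne.mpr ⟨block_subset, fun h ↦ ?_⟩
    have := Finset.card_le_card hsub
    rw [h, Finset.card_singleton] at this
    omega
  obtain ⟨Tm, hTm, hmax⟩ := C.exists_max_image Finset.card hC
  obtain ⟨hTmR, hTmT, hxTm⟩ := Finset.mem_filter.mp hTm
  refine lt_of_le_of_lt (fun y hy ↦ ?_) hTmT
  obtain ⟨-, rfl | ⟨T', hT', hss, hxT', hyT'⟩⟩ := Finset.mem_filter.mp hy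
  · exact hxTm
  rcases hR.subset_or_subset hT' hTmR hxT' hxTm with h | h
  · exact h hyT'
  · rw [Finset.eq_of_subset_of_card_le h (hmax T' (Finset.mem_filter.mpr ⟨hT', hss, hxT'⟩))]
    exact hyT'

theorem IsLaminar.exists_separated_pair (hR : IsLaminar R) (hcard : 2 ≤ T.card) :
    ∃ x ∈ T, ∃ y ∈ T, x ≠ y ∧ ∀ T' ∈ R, T' ⊂ T → x ∈ T' → y ∉ T' := by
  obtain ⟨x, hx⟩ := Finset.card_pos.mp (by omega : 0 < T.card)
  obtain ⟨y, hyT, hyb⟩ := Finset.exists_of_ssubset (hR.block_ssubset (x := x) hcard)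
  refine ⟨x, hx, y, hyT, fun hxy ↦ hyb (hxy ▸ mem_block_self hx), fun T' hT' hss hxT' hyT' ↦ hyb ?_⟩
  exact Finset.mem_filter.mpr ⟨hyT, Or.inr ⟨T', hT', hss, hxT', hyT'⟩⟩

end Laminar

section Node

variable {α : Type*} [LinearOrder α] [Fintype α] {R : Finset (Finset α)} {T : Finset α}
  {i j : α}

variable (R) in
/-- The smallest member of `R` containing `i` and an element smaller than `i` (an empty
infimum, `univ`, when `i` is least). -/
def nodeOf (i : α) : Finset α :=
  {T ∈ R | i ∈ T ∧ ∃ j ∈ T, j < i}.inf id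

theorem mem_nodeOf_self : i ∈ nodeOf R i :=
  Finset.mem_inf.mpr fun _ hT ↦ (Finset.mem_filter.mp hT).2.1

theorem nodeOf_subset (hT : T ∈ R) (hi : i ∈ T) (hj : j ∈ T) (hji : j < i) : nodeOf R i ⊆ T :=
  Finset.inf_le (f := id) (Finset.mem_filter.mpr ⟨hT, hi, j, hj, hji⟩)

theorem IsLaminar.nodeOf_mem (hR : IsLaminar R) (huniv : Finset.univ ∈ R) (hi : ∃ j, j < i) :
    nodeOf R i ∈ R ∧ ∃ j ∈ nodeOf R i, j < i := by
  have hmem := Finset.inf_mem {T | T ∈ R ∧ i ∈ T ∧ ∃ j ∈ T, j < i}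
    ⟨huniv, Finset.mem_univ i, hi.imp fun j hj ↦ ⟨Finset.mem_univ j, hj⟩⟩
    (fun S₁ ⟨h₁, hi₁, _⟩ S₂ ⟨h₂, hi₂, _⟩ ↦ by
      rcases hR.subset_or_subset h₁ h₂ hi₁ hi₂ with h | h
      · rwa [Finset.inf_eq_inter, Finset.inter_eq_left.mpr h]
      · rwa [Finset.inf_eq_inter, Finset.inter_eq_right.mpr h])
    {T ∈ R | i ∈ T ∧ ∃ j ∈ T, j < i} id (fun T hT ↦ Finset.mem_filter.mp hT)
  exact ⟨hmem.1, hmem.2.2⟩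

theorem notMem_of_ssubset_nodeOf (hT : T ∈ R) (hsub : T ⊂ nodeOf R i) (hi : i ∈ T) (hji : j < i) :
    j ∉ T :=
  fun hj ↦ (not_subset_of_ssubset hsub) (nodeOf_subset hT hi hj hji)

theorem notMem_block_of_lt (hM : nodeOf R i = T) (hji : j < i) : i ∉ block R T j := by
  subst hM
  exact notMem_block hji.ne' fun T' hT' hss hj hi ↦ notMem_of_ssubset_nodeOf hT' hss hi hji hj

theorem notMem_block_self_of_lt (hM : nodeOf R i = T) (hji : j < i) : j ∉ block R T i := by
  subst hM
  exact notMem_block hji.ne fun T' hT' hss hi ↦ notMem_of_ssubset_nodeOf hT' hss hi hji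

end Node

section Eigenbasis

variable {n : ℕ} {R : Finset (Finset (Fin n))} {M T : Finset (Fin n)} {i j x y : Fin n}

def pairVec (B F : Finset (Fin n)) : Fin n → ℚ :=
  fun k ↦ (if k ∈ B then (F.card : ℚ) else 0) - if k ∈ F then (B.card : ℚ) else 0

theorem sum_pairVec (B F : Finset (Fin n)) : ∑ k, pairVec B F k = 0 := by
  simp [pairVec, Finset.sum_sub_distrib, Finset.sum_ite_mem, mul_comm]

theorem pairVec_eq_zero {B F : Finset (Fin n)} {k : Fin n} (hB : k ∉ B) (hF : k ∉ F) :
    pairVec B F k = 0 := by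
  simp [pairVec, hB, hF]

theorem exists_forall_pairVec_eq {B F S : Finset (Fin n)} (hB : S ⊆ B ∨ Disjoint S B)
    (hF : S ⊆ F ∨ Disjoint S F) : ∃ a, ∀ k ∈ S, pairVec B F k = a := by
  refine ⟨(if S ⊆ B then (F.card : ℚ) else 0) - if S ⊆ F then (B.card : ℚ) else 0,
    fun k hk ↦ ?_⟩
  have hmem : ∀ {C : Finset (Fin n)}, (S ⊆ C ∨ Disjoint S C) → (k ∈ C ↔ S ⊆ C) := by
    rintro C (h | h)
    · exact iff_of_true (h hk) h
    · exact iff_of_false (Finset.disjoint_left.mp h hk) fun h' ↦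
        Finset.disjoint_left.mp h hk (h' hk)
  simp only [pairVec, hmem hB, hmem hF]

theorem IsLaminar.AT_mulVec_pairVec (hR : IsLaminar R) (hM : M ∈ R) (hT : T ∈ R) :
    AT n T *ᵥ pairVec (block R M x) (block R M y) =
      (if M ⊆ T then (T.card : ℚ) else 0) • pairVec (block R M x) (block R M y) := by
  split_ifs with hMT
  · exact AT_mulVec_eq_card_smul
      (fun k hk ↦ pairVec_eq_zero (fun h ↦ hk (hMT (block_subset h)))
        (fun h ↦ hk (hMT (block_subset h))))
      (sum_pairVec _ _)
  · obtain ⟨a, ha⟩ := exists_forall_pairVec_eq (hR.subset_block_or_disjoint hM hT hMT)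
      (hR.subset_block_or_disjoint hM hT hMT)
    rw [AT_mulVec_eq_zero ha, zero_smul]

variable (R) in
def eigvec (i : Fin n) : Fin n → ℚ :=
  if ∃ j, j < i then
    pairVec (block R (nodeOf R i) i) (block R (nodeOf R i) ((nodeOf R i).min' ⟨i, mem_nodeOf_self⟩))
  else fun _ ↦ 1

variable (R) in
def eigval (i : Fin n) (T : Finset (Fin n)) : ℚ :=
  if (∃ j, j < i) ∧ nodeOf R i ⊆ T then T.card else 0

theorem IsLaminar.AT_mulVec_eigvec (hR : IsLaminar R) (huniv : Finset.univ ∈ R) (hT : T ∈ R)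
    (i : Fin n) : AT n T *ᵥ eigvec R i = eigval R i T • eigvec R i := by
  by_cases hi : ∃ j, j < i
  · simp only [eigvec, eigval, hi, true_and, if_true]
    exact hR.AT_mulVec_pairVec (hR.nodeOf_mem huniv hi).1 hT
  · simp only [eigvec, eigval, hi, false_and, if_false, zero_smul]
    exact AT_mulVec_one T

theorem eigval_ne_zero_iff : eigval R i T ≠ 0 ↔ (∃ j, j < i) ∧ nodeOf R i ⊆ T := by
  unfold eigval
  split_ifs with h
  · simpa [h] using Finset.card_ne_zero.mpr ⟨i, h.2 mem_nodeOf_self⟩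
  · simpa using h

theorem IsLaminar.nodeOf_eq_of_eigval_eq (hR : IsLaminar R) (huniv : Finset.univ ∈ R)
    (hij : i ≠ j) (h : ∀ T ∈ R, eigval R j T = eigval R i T) :
    (∃ k, k < i) ∧ (∃ k, k < j) ∧ nodeOf R j = nodeOf R i := by
  have hsub : ∀ {a b : Fin n}, (∀ T ∈ R, eigval R a T = eigval R b T) → (∃ k, k < a) →
      (∃ k, k < b) ∧ nodeOf R b ⊆ nodeOf R a := by
    intro a b hab ha
    rw [← eigval_ne_zero_iff, ← hab _ (hR.nodeOf_mem huniv ha).1, eigval_ne_zero_iff]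
    exact ⟨ha, le_rfl⟩
  have h' : ∀ T ∈ R, eigval R i T = eigval R j T := fun T hT ↦ (h T hT).symm
  by_cases hj : ∃ k, k < j
  · obtain ⟨hi, hij'⟩ := hsub h hj
    exact ⟨hi, hj, (hsub h' hi).2.antisymm hij'⟩
  by_cases hi : ∃ k, k < i
  · exact absurd (hsub h' hi).1 hj
  simp only [not_exists, not_lt] at hi hj
  exact absurd (le_antisymm (hi j) (hj i)) hij

theorem IsLaminar.min'_nodeOf_lt (hR : IsLaminar R) (huniv : Finset.univ ∈ R) (hi : ∃ j, j < i)
    (hM : nodeOf R i = M) (hne : M.Nonempty) : M.min' hne < i := by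
  obtain ⟨j, hjM, hji⟩ := (hR.nodeOf_mem huniv hi).2
  exact (M.min'_le j (hM ▸ hjM)).trans_lt hji

theorem IsLaminar.eigvec_self_ne_zero (hR : IsLaminar R) (huniv : Finset.univ ∈ R) (i : Fin n) :
    eigvec R i i ≠ 0 := by
  unfold eigvec
  split_ifs with hi
  · have hmi := hR.min'_nodeOf_lt huniv hi rfl ⟨i, mem_nodeOf_self⟩
    have hF := mem_block_self (R := R) (Finset.min'_mem _ ⟨i, mem_nodeOf_self (R := R)⟩)
    simp only [pairVec, mem_block_self mem_nodeOf_self, notMem_block_of_lt rfl hmi, if_true,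
      if_false, sub_zero, Nat.cast_ne_zero]
    exact Finset.card_ne_zero.mpr ⟨_, hF⟩
  · exact one_ne_zero

theorem IsLaminar.eigvec_apply_eq_zero (hR : IsLaminar R) (huniv : Finset.univ ∈ R) (hji : j ≠ i)
    (h : ∀ T ∈ R, eigval R j T = eigval R i T) : eigvec R j i = 0 := by
  obtain ⟨hi, hj, hM⟩ := hR.nodeOf_eq_of_eigval_eq huniv hji.symm h
  simp only [eigvec, hj, if_true]
  refine pairVec_eq_zero ?_ (notMem_block_of_lt hM.symm
    (hR.min'_nodeOf_lt huniv hi hM.symm ⟨j, mem_nodeOf_self⟩))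
  rcases lt_or_gt_of_ne hji with hlt | hlt
  · exact notMem_block_of_lt hM.symm hlt
  · exact notMem_block_self_of_lt rfl hlt

theorem IsLaminar.linearIndependent_eigvec (hR : IsLaminar R) (huniv : Finset.univ ∈ R) :
    LinearIndependent ℚ (eigvec R) :=
  linearIndependent_of_mulVec_eq_smul (fun T : {T // T ∈ R} ↦ AT n T) (fun T ↦ AT_transpose T.1)
    (eigvec R) (fun i T ↦ eigval R i T) (fun i T ↦ hR.AT_mulVec_eigvec huniv T.2 i)
    fun i ↦ ⟨i, hR.eigvec_self_ne_zero huniv i, fun _ hji h ↦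
      hR.eigvec_apply_eq_zero huniv hji fun T hT ↦ congrFun h ⟨T, hT⟩⟩

end Eigenbasis

section TreeSpecies

variable {n : ℕ} {R : Finset (Finset (Fin n))} {S T : Finset (Fin n)}

theorem commute_AT (h : Disjoint S T ∨ S ⊆ T ∨ T ⊆ S) : Commute (AT n S) (AT n T) := by
  rcases h with h | h | h
  · rw [Commute, SemiconjBy, AT_mul_AT_of_disjoint h, AT_mul_AT_of_disjoint h.symm]
  · rw [Commute, SemiconjBy, AT_mul_AT_of_subset h, AT_mul_AT_of_superset h]
  · rw [Commute, SemiconjBy, AT_mul_AT_of_superset h, AT_mul_AT_of_subset h]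

theorem IsLaminar.AT_mul_AT_mem_span (hR : IsLaminar R) (hS : S ∈ R) (hT : T ∈ R) :
    AT n S * AT n T ∈ Submodule.span ℚ ((fun T ↦ AT n T) '' ↑R) := by
  have hmem : ∀ T ∈ R, AT n T ∈ Submodule.span ℚ ((fun T ↦ AT n T) '' ↑R) :=
    fun T hT ↦ Submodule.subset_span ⟨T, hT, rfl⟩
  rcases hR S hS T hT with h | h | h
  · rw [AT_mul_AT_of_disjoint h]
    exact Submodule.zero_mem _
  · rw [AT_mul_AT_of_subset h]
    exact Submodule.smul_mem _ _ (hmem S hS)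
  · rw [AT_mul_AT_of_superset h]
    exact Submodule.smul_mem _ _ (hmem T hT)

theorem IsLaminar.linearIndependent_AT (hR : IsLaminar R) (hcard : ∀ T ∈ R, 2 ≤ T.card) :
    LinearIndependent ℚ (fun T : {T // T ∈ R} ↦ AT n T) := by
  rw [Fintype.linearIndependent_iff]
  intro g hg
  by_contra! ⟨T₀, hT₀⟩
  obtain ⟨Tm, hTm, hmax⟩ :=
    Finset.exists_max_image {T | g T ≠ 0} (fun T ↦ T.1.card) ⟨T₀, by simpa using hT₀⟩
  obtain ⟨x, hx, y, hy, hxy, hsep⟩ := hR.exists_separated_pair (hcard _ Tm.2)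
  have hentry : ∑ T : {T // T ∈ R}, g T * AT n T x y = 0 := by
    simpa [Matrix.sum_apply] using congrFun (congrFun hg x) y
  rw [Finset.sum_eq_single Tm] at hentry
  · simp only [AT_apply_of_ne _ hxy, hx, hy, and_self, if_true, mul_neg, mul_one,
      neg_eq_zero] at hentry
    exact (Finset.mem_filter.mp hTm).2 hentry
  · intro T _ hne
    rw [AT_apply_of_ne _ hxy]
    split_ifs with hxyT
    · rcases hR.subset_or_subset T.2 Tm.2 hxyT.1 hx with h | h
      · exact absurd hxyT.2 (hsep T T.2
          (Finset.ssubset_iff_subset_ne.mpr ⟨h, fun he ↦ hne (Subtype.ext he)⟩) hxyT.1)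
      · have hlt : Tm.1.card < T.1.card := Finset.card_lt_card
          (Finset.ssubset_iff_subset_ne.mpr ⟨h, fun he ↦ hne (Subtype.ext he.symm)⟩)
        have hgT : g T = 0 := by
          by_contra hgT
          exact (hmax T (by simpa using hgT)).not_gt hlt
        rw [hgT, zero_mul]
    · exact mul_zero _
  · simp

end TreeSpecies

/-- For a tree species `R` on `{1,…,n}`, the rational span of `{A(T) : T ∈ R}` is a
commutative (nonunital) subalgebra of symmetric magic matrices of sum zero, the family
`{A(T) : T ∈ R}` is linearly independent, and all these matrices are simultaneously
diagonalizable. -/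
theorem stmt9 (n : ℕ) (R : Finset (Finset (Fin n)))
    (huniv : Finset.univ ∈ R)
    (hcard : ∀ T ∈ R, 2 ≤ T.card)
    (hnest : ∀ T1 ∈ R, ∀ T2 ∈ R, Disjoint T1 T2 ∨ T1 ⊆ T2 ∨ T2 ⊆ T1) :
    (∀ X ∈ Submodule.span ℚ ((fun T => AT n T) '' ↑R),
      ∀ Y ∈ Submodule.span ℚ ((fun T => AT n T) '' ↑R),
        X * Y ∈ Submodule.span ℚ ((fun T => AT n T) '' ↑R) ∧ X * Y = Y * X) ∧
    (∀ X ∈ Submodule.span ℚ ((fun T => AT n T) '' ↑R), Xᵀ = X ∧ IsMagic X 0) ∧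
    LinearIndependent ℚ (fun T : {T // T ∈ R} => AT n T.val) ∧
    (∃ P : Matrix (Fin n) (Fin n) ℚ, IsUnit P ∧ ∀ T ∈ R, (P⁻¹ * AT n T * P).IsDiag) := by
  have hR : IsLaminar R := hnest
  refine ⟨fun X hX Y hY ↦ ⟨?_, ?_⟩, fun X hX ↦ ?_, hR.linearIndependent_AT hcard, ?_⟩
  · refine mul_mem_span_of_forall_mul_mem ?_ hX hY
    rintro _ ⟨S, hS, rfl⟩ _ ⟨T, hT, rfl⟩
    exact hR.AT_mul_AT_mem_span hS hT
  · refine commute_of_mem_span ?_ hX hY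
    rintro _ ⟨S, hS, rfl⟩ _ ⟨T, hT, rfl⟩
    exact commute_AT (hR S hS T hT)
  · refine (Submodule.span_le (p := symmetricMagicZero n ℚ)).mpr ?_ hX
    rintro _ ⟨T, -, rfl⟩
    exact ⟨AT_transpose T, isMagic_AT T⟩
  · obtain ⟨P, hP, hdiag⟩ := exists_isUnit_forall_isDiag (fun T : {T // T ∈ R} ↦ AT n T)
      (eigvec R) (hR.linearIndependent_eigvec huniv) (fun i T ↦ eigval R i T)
      fun i T ↦ hR.AT_mulVec_eigvec huniv T.2 i
    exact ⟨P, hP, fun T hT ↦ hdiag ⟨T, hT⟩⟩
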